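/- Let μ̂_1 ≥ ... ≥ μ̂_n ≥ 0 and η > 0, and let S_jj = ∏_{τ=0}^{t-1}(1 - α_τ μ̂_j) with step sizes satisfying 0 ≤ α_τ ≤ min{1, 1/μ̂_1} and ∑_τ α_τ = η. Then (1/2^4)·∑_{j=1}^n (min{1, η μ̂_j})^4 ≤ ∑_{j=1}^n (1 - S_jj)^4 ≤ ∑_{j=1}^n (min{1, η μ̂_j})^4. -/

import Mathlib

/-!
Write `x_τ = α_τ μ_j ∈ [0, 1]`, so that `∑ τ, x_τ = η μ_j`. The Weierstrass product inequality
`1 - ∑ x_τ ≤ ∏ (1 - x_τ)` bounds `1 - ∏ (1 - x_τ)` above by `min 1 (η μ_j)`. From below,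
`∏ (1 - x_τ) ≤ exp (-∑ x_τ)` and `exp (-m) ≤ 1 - m / 2` on `[0, 1]` give half
of that minimum. Fourth powers are monotone on nonnegative reals, so summing over `j` concludes.
-/

open Finset

theorem one_sub_sum_le_prod_one_sub {ι R : Type*} [CommRing R] [LinearOrder R]
    [IsStrictOrderedRing R] (s : Finset ι) {f : ι → R}
    (h0 : ∀ i ∈ s, 0 ≤ f i) (h1 : ∀ i ∈ s, f i ≤ 1) :
    1 - ∑ i ∈ s, f i ≤ ∏ i ∈ s, (1 - f i) := by
  classical
  induction s using Finset.induction_on with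
  | empty => simp
  | insert a s ha ih =>
    rw [sum_insert ha, prod_insert ha]
    have hs := ih (fun i hi => h0 i (mem_insert_of_mem hi))
      (fun i hi => h1 i (mem_insert_of_mem hi))
    have hs0 : 0 ≤ ∑ i ∈ s, f i := sum_nonneg fun i hi => h0 i (mem_insert_of_mem hi)
    have hfa0 := h0 a (mem_insert_self a s)
    have hfa1 := h1 a (mem_insert_self a s)
    nlinarith [mul_le_mul_of_nonneg_left hs (sub_nonneg.2 hfa1)]

theorem prod_one_sub_le_exp_neg_sum {ι : Type*} (s : Finset ι) {f : ι → ℝ}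
    (hf : ∀ i ∈ s, f i ≤ 1) : ∏ i ∈ s, (1 - f i) ≤ Real.exp (-∑ i ∈ s, f i) := by
  rw [← sum_neg_distrib, Real.exp_sum]
  exact prod_le_prod (fun i hi => sub_nonneg.2 (hf i hi)) fun i _ => Real.one_sub_le_exp_neg _

theorem exp_neg_le_one_sub_half {m : ℝ} (h0 : 0 ≤ m) (h1 : m ≤ 1) :
    Real.exp (-m) ≤ 1 - m / 2 := by
  rw [Real.exp_neg, inv_le_iff_one_le_mul₀ (Real.exp_pos m)]
  -- `(1 - m / 2) * (1 + m) = 1 + m * (1 - m) / 2 ≥ 1`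
  nlinarith [Real.add_one_le_exp m]

theorem min_one_sum_div_two_le_one_sub_prod {ι : Type*} (s : Finset ι) {f : ι → ℝ}
    (h0 : ∀ i ∈ s, 0 ≤ f i) (h1 : ∀ i ∈ s, f i ≤ 1) :
    min 1 (∑ i ∈ s, f i) / 2 ≤ 1 - ∏ i ∈ s, (1 - f i) := by
  have hm0 : 0 ≤ min 1 (∑ i ∈ s, f i) := le_min zero_le_one (sum_nonneg h0)
  calc min 1 (∑ i ∈ s, f i) / 2
      ≤ 1 - Real.exp (-min 1 (∑ i ∈ s, f i)) := by
        linarith [exp_neg_le_one_sub_half hm0 (min_le_left _ _)]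
    _ ≤ 1 - Real.exp (-∑ i ∈ s, f i) := by gcongr; exact min_le_right _ _
    _ ≤ 1 - ∏ i ∈ s, (1 - f i) := sub_le_sub_left (prod_one_sub_le_exp_neg_sum s h1) 1

theorem one_sub_prod_le_min_one_sum {ι : Type*} (s : Finset ι) {f : ι → ℝ}
    (h0 : ∀ i ∈ s, 0 ≤ f i) (h1 : ∀ i ∈ s, f i ≤ 1) :
    1 - ∏ i ∈ s, (1 - f i) ≤ min 1 (∑ i ∈ s, f i) :=
  le_min (sub_le_self 1 (prod_nonneg fun i hi => sub_nonneg.2 (h1 i hi)))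
    (by linarith [one_sub_sum_le_prod_one_sub s h0 h1])

theorem mul_le_one_of_le_one_div {K : Type*} [Field K] [LinearOrder K] [IsStrictOrderedRing K]
    {a x y : K} (ha : 0 ≤ a) (hx : 0 ≤ x) (hxy : x ≤ y) (hay : a ≤ 1 / y) : a * x ≤ 1 := by
  rcases hx.eq_or_lt with rfl | hx
  · simp
  calc a * x ≤ a * y := by gcongr
    _ ≤ 1 := (le_div_iff₀ (hx.trans_le hxy)).1 hay

theorem stmt_3_general (n t : ℕ) (hn : 0 < n) (μ : Fin n → ℝ)
    (hmono : Antitone μ) (hnn : ∀ j, 0 ≤ μ j)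
    (η : ℝ) (α : Fin t → ℝ)
    (hα : ∀ τ, 0 ≤ α τ ∧ α τ ≤ min 1 (1 / μ ⟨0, hn⟩))
    (hsum : ∑ τ, α τ = η) :
    (1 / 2 ^ 4) * ∑ j, (min 1 (η * μ j)) ^ 4
        ≤ ∑ j, (1 - ∏ τ, (1 - α τ * μ j)) ^ 4 ∧
      ∑ j, (1 - ∏ τ, (1 - α τ * μ j)) ^ 4 ≤ ∑ j, (min 1 (η * μ j)) ^ 4 := by
  have hx0 (j : Fin n) (τ : Fin t) (_ : τ ∈ univ) : 0 ≤ α τ * μ j :=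
    mul_nonneg (hα τ).1 (hnn j)
  have hx1 (j : Fin n) (τ : Fin t) (_ : τ ∈ univ) : α τ * μ j ≤ 1 :=
    mul_le_one_of_le_one_div (hα τ).1 (hnn j) (hmono (show ⟨0, hn⟩ ≤ j from Nat.zero_le _))
      ((hα τ).2.trans (min_le_right _ _))
  have hsum_mul (j : Fin n) : ∑ τ, α τ * μ j = η * μ j := by rw [← sum_mul, hsum]
  have hlower (j : Fin n) : min 1 (η * μ j) / 2 ≤ 1 - ∏ τ, (1 - α τ * μ j) :=
    hsum_mul j ▸ min_one_sum_div_two_le_one_sub_prod univ (hx0 j) (hx1 j)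
  have hupper (j : Fin n) : 1 - ∏ τ, (1 - α τ * μ j) ≤ min 1 (η * μ j) :=
    hsum_mul j ▸ one_sub_prod_le_min_one_sum univ (hx0 j) (hx1 j)
  have hmin0 (j : Fin n) : 0 ≤ min 1 (η * μ j) / 2 :=
    hsum_mul j ▸ div_nonneg (le_min zero_le_one (sum_nonneg (hx0 j))) zero_le_two
  constructor
  · calc (1 / 2 ^ 4) * ∑ j, (min 1 (η * μ j)) ^ 4 = ∑ j, (min 1 (η * μ j) / 2) ^ 4 := by
          rw [mul_sum]; congr 1; ext j; ring
      _ ≤ ∑ j, (1 - ∏ τ, (1 - α τ * μ j)) ^ 4 :=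
          sum_le_sum fun j _ => pow_le_pow_left₀ (hmin0 j) (hlower j) 4
  · exact sum_le_sum fun j _ =>
      pow_le_pow_left₀ ((hmin0 j).trans (hlower j)) (hupper j) 4

theorem stmt_3 (n t : ℕ) (hn : 0 < n) (μ : Fin n → ℝ)
    (hmono : Antitone μ) (hnn : ∀ j, 0 ≤ μ j)
    (η : ℝ) (hη : 0 < η) (α : Fin t → ℝ)
    (hα : ∀ τ, 0 ≤ α τ ∧ α τ ≤ min 1 (1 / μ ⟨0, hn⟩))
    (hsum : ∑ τ, α τ = η) :
    (1 / 2 ^ 4) * ∑ j, (min 1 (η * μ j)) ^ 4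
        ≤ ∑ j, (1 - ∏ τ, (1 - α τ * μ j)) ^ 4 ∧
      ∑ j, (1 - ∏ τ, (1 - α τ * μ j)) ^ 4 ≤ ∑ j, (min 1 (η * μ j)) ^ 4 :=
  stmt_3_general n t hn μ hmono hnn η α hα hsum
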